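/- arXiv:1502.00367 — 5 statements merged into one kernel-verified Lean document; each statement's English description precedes it below -/
import Mathlib

section
/- Let L₂ = { w · (wᴿ)ₓ₃ · (w)ₓ₁₅ · (wᴿ)ₓ₅ : w a nonempty string over {1,2} } over the alphabet {1,2,3,6,5,10,15,30}, where wᴿ denotes the reverse of w and (u)ₓc denotes the string obtained from u by multiplying each symbol (regarded as a natural number) by c. Then L₂ is the intersection of the two context-free languages L₂,₁ = { w · (wᴿ)ₓ₃ · x : w a nonempty string over {1,2}, x a nonempty string over {5,10,15,30} } and L₂,₂ = { y · (yᴿ)ₓ₅ : y a nonempty string over {1,2,3,6} }; in particular L₂ belongs to CFL(2), the class of intersections of two context-free languages. -/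
/-- Multiply every symbol (a natural number) of the string `u` by `c`. -/
def mulStr (c : ℕ) (u : List ℕ) : List ℕ := u.map (c * ·)

/-- The eight-symbol alphabet Σ = {1,2,3,6,5,10,15,30}. -/
def Sigma8 : Set ℕ := {1, 2, 3, 6, 5, 10, 15, 30}

/-- The nested palindrome `w (wᴿ)ₓ₃ (w)ₓ₁₅ (wᴿ)ₓ₅`. -/
def nest (w : List ℕ) : List ℕ :=
  w ++ mulStr 3 w.reverse ++ mulStr 15 w ++ mulStr 5 w.reverse

/-- The test language L₂. -/
def L2 : Language ℕ :=
  {s | ∃ w : List ℕ, w ≠ [] ∧ (∀ a ∈ w, a = 1 ∨ a = 2) ∧ s = nest w}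

/-- `L` is CFL-immune: `L` is infinite and no infinite subset of `L` is context-free. -/
def CFLImmune {T : Type} (L : Language T) : Prop :=
  Set.Infinite (L : Set (List T)) ∧
    ∀ M : Language T, M ≤ L → Set.Infinite (M : Set (List T)) → ¬ M.IsContextFree

/-- `L`, a language over the (sub)alphabet `A ⊆ ℕ`, belongs to CFL/n with parallel
(length-respecting) advice: there are an alphabet `Γ`, an advice `h` with `|h n| = n`,
and a context-free `L'` over the product alphabet such that for every string `x` over `A`,
`x ∈ L` iff the componentwise pairing of `x` with `h |x|` is in `L'`. -/
def InCFLAdviceParallel (A : Set ℕ) (L : Language ℕ) : Prop :=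
  ∃ (Γ : Type) (_ : Fintype Γ) (h : ℕ → List Γ) (L' : Language (ℕ × Γ)),
    (∀ n, (h n).length = n) ∧ L'.IsContextFree ∧
    ∀ x : List ℕ, (∀ a ∈ x, a ∈ A) → (x ∈ L ↔ x.zip (h x.length) ∈ L')

/-- `L`, a language over the (sub)alphabet `A ⊆ ℕ`, belongs to (CFL/n)_serial
(Damm–Holzer style serial advice): there are an alphabet `Γ₀`, an advice `g` with
`|g n| = n`, and a context-free `L''` over the disjoint-union alphabet `Γ₀ ⊕ ℕ` such
that for every string `x` over `A`, `x ∈ L` iff `g |x| · x ∈ L''`. -/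
def InCFLAdviceSerial (A : Set ℕ) (L : Language ℕ) : Prop :=
  ∃ (Γ₀ : Type) (_ : Fintype Γ₀) (g : ℕ → List Γ₀) (L'' : Language (Γ₀ ⊕ ℕ)),
    (∀ n, (g n).length = n) ∧ L''.IsContextFree ∧
    ∀ x : List ℕ, (∀ a ∈ x, a ∈ A) →
      (x ∈ L ↔ (g x.length).map Sum.inl ++ x.map Sum.inr ∈ L'')

/-- The language L₂,₁. -/
def L21 : Language ℕ :=
  {s | ∃ w x : List ℕ, w ≠ [] ∧ (∀ a ∈ w, a = 1 ∨ a = 2) ∧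
    x ≠ [] ∧ (∀ a ∈ x, a = 5 ∨ a = 10 ∨ a = 15 ∨ a = 30) ∧
    s = w ++ mulStr 3 w.reverse ++ x}

/-- The language L₂,₂. -/
def L22 : Language ℕ :=
  {s | ∃ y : List ℕ, y ≠ [] ∧ (∀ a ∈ y, a = 1 ∨ a = 2 ∨ a = 3 ∨ a = 6) ∧
    s = y ++ mulStr 5 y.reverse}

/-!
Both languages are generated by linear grammars with rules `M → a M (f a) | a (f a)` (for L₂,₁
after a start rule `S → M X` and a tail nonterminal `X → b X | b`). A derivation of a terminal
word from `M` must begin with one of these rules, and the terminals it places around `M` are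
already part of the final word, so the language of `M` follows by induction on the word length.

For the intersection, the letters 1, 2, 3, 6 are exactly those not divisible by 5, so in
`w (wᴿ)ₓ₃ x = y (yᴿ)ₓ₅` the prefixes `w (wᴿ)ₓ₃` and `y` coincide, and then
`y (yᴿ)ₓ₅ = w (wᴿ)ₓ₃ (w)ₓ₁₅ (wᴿ)ₓ₅`.
-/

open Symbol

theorem List.eq_of_append_eq_append_of_forall {α : Type*} {p : α → Prop} {l₁ l₂ r₁ r₂ : List α}
    (hl₁ : ∀ a ∈ l₁, p a) (hl₂ : ∀ a ∈ l₂, p a) (hr₁ : ∀ a ∈ r₁, ¬ p a)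
    (hr₂ : ∀ a ∈ r₂, ¬ p a) (h : l₁ ++ r₁ = l₂ ++ r₂) : l₁ = l₂ := by
  rcases List.append_eq_append_iff.mp h with ⟨t, rfl, rfl⟩ | ⟨t, rfl, rfl⟩
  · cases t with
    | nil => simp
    | cons c t => exact absurd (hl₂ c (by simp)) (hr₁ c (by simp))
  · cases t with
    | nil => simp
    | cons c t => exact absurd (hl₁ c (by simp)) (hr₂ c (by simp))

namespace ContextFreeRule

variable {T N : Type*} {r : ContextFreeRule T N}

theorem Rewrites.append_split {u v w : List (Symbol T N)} (h : r.Rewrites (u ++ v) w) :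
    (∃ u', r.Rewrites u u' ∧ w = u' ++ v) ∨ (∃ v', r.Rewrites v v' ∧ w = u ++ v') := by
  induction u generalizing w with
  | nil => exact .inr ⟨w, h, rfl⟩
  | cons x u ih =>
    cases h with
    | head => exact .inl ⟨r.output ++ u, .head u, by simp⟩
    | cons _ h =>
      rcases ih h with ⟨u', hu, rfl⟩ | ⟨v', hv, rfl⟩
      · exact .inl ⟨x :: u', hu.cons x, rfl⟩
      · exact .inr ⟨v', hv, rfl⟩

theorem rewrites_singleton_iff {n : N} {v : List (Symbol T N)} :
    r.Rewrites [nonterminal n] v ↔ r.input = n ∧ v = r.output := by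
  constructor
  · rintro (_ | ⟨_, h⟩)
    · simp
    · cases h
  · rintro ⟨rfl, rfl⟩
    exact Rewrites.input_output

end ContextFreeRule

namespace ContextFreeGrammar

variable {T : Type} {g : ContextFreeGrammar T}

theorem Produces.append_split {u v w : List (Symbol T g.NT)} (h : g.Produces (u ++ v) w) :
    (∃ u', g.Produces u u' ∧ w = u' ++ v) ∨ (∃ v', g.Produces v v' ∧ w = u ++ v') := by
  obtain ⟨r, hr, hrw⟩ := h
  rcases hrw.append_split with ⟨u', hu, rfl⟩ | ⟨v', hv, rfl⟩
  · exact .inl ⟨u', ⟨r, hr, hu⟩, rfl⟩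
  · exact .inr ⟨v', ⟨r, hr, hv⟩, rfl⟩

theorem Derives.append_split {u v w : List (Symbol T g.NT)} (h : g.Derives (u ++ v) w) :
    ∃ u' v', w = u' ++ v' ∧ g.Derives u u' ∧ g.Derives v v' := by
  generalize huv : u ++ v = s at h
  induction h using Relation.ReflTransGen.head_induction_on generalizing u v with
  | refl => exact ⟨u, v, huv.symm, .refl u, .refl v⟩
  | head hstep _ ih =>
    subst huv
    rcases hstep.append_split with ⟨u', hu, rfl⟩ | ⟨v', hv, rfl⟩
    · obtain ⟨x, y, rfl, hx, hy⟩ := ih rfl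
      exact ⟨x, y, rfl, hu.trans_derives hx, hy⟩
    · obtain ⟨x, y, rfl, hx, hy⟩ := ih rfl
      exact ⟨x, y, rfl, hx, hv.trans_derives hy⟩

theorem Derives.eq_of_map_terminal {u : List T} {v : List (Symbol T g.NT)}
    (h : g.Derives (u.map terminal) v) : v = u.map terminal := by
  rcases h.eq_or_head with rfl | ⟨_, hstep, -⟩
  · rfl
  · simpa using hstep.exists_nonterminal_input_mem

theorem derives_map_terminal_iff {u w : List T} :
    g.Derives (u.map terminal) (w.map terminal) ↔ w = u := by
  refine ⟨fun h => ?_, fun h => h ▸ .refl _⟩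
  exact List.map_injective_iff.mpr (fun _ _ => terminal.inj) h.eq_of_map_terminal

theorem derives_append_iff {u v : List (Symbol T g.NT)} {w : List T} :
    g.Derives (u ++ v) (w.map terminal) ↔
      ∃ w₁ w₂, w = w₁ ++ w₂ ∧ g.Derives u (w₁.map terminal) ∧ g.Derives v (w₂.map terminal) := by
  constructor
  · intro h
    obtain ⟨u', v', huv, hu, hv⟩ := h.append_split
    obtain ⟨w₁, w₂, rfl, rfl, rfl⟩ := List.map_eq_append_iff.mp huv
    exact ⟨w₁, w₂, rfl, hu, hv⟩
  · rintro ⟨w₁, w₂, rfl, hu, hv⟩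
    simpa using (hu.append_right v).trans (hv.append_left _)

theorem derives_map_terminal_append_iff {s : List T} {v : List (Symbol T g.NT)} {w : List T} :
    g.Derives (s.map terminal ++ v) (w.map terminal) ↔
      ∃ w', w = s ++ w' ∧ g.Derives v (w'.map terminal) := by
  simp [derives_append_iff, derives_map_terminal_iff]

theorem derives_append_map_terminal_iff {u : List (Symbol T g.NT)} {s w : List T} :
    g.Derives (u ++ s.map terminal) (w.map terminal) ↔
      ∃ w', w = w' ++ s ∧ g.Derives u (w'.map terminal) := by
  simp [derives_append_iff, derives_map_terminal_iff, and_comm]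

theorem derives_nonterminal_iff {n : g.NT} {w : List T} :
    g.Derives [nonterminal n] (w.map terminal) ↔
      ∃ r ∈ g.rules, r.input = n ∧ g.Derives r.output (w.map terminal) := by
  constructor
  · intro h
    rcases h.eq_or_head with h | ⟨v, ⟨r, hr, hrv⟩, hv⟩
    · simpa using congrArg (nonterminal n ∈ ·) h
    · obtain ⟨rfl, rfl⟩ := ContextFreeRule.rewrites_singleton_iff.mp hrv
      exact ⟨r, hr, rfl, hv⟩
  · rintro ⟨r, hr, rfl, h⟩
    exact Produces.trans_derives ⟨r, hr, .input_output⟩ h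

theorem derives_nonterminal_iff_of_filter_eq_singleton [DecidableEq g.NT] {n : g.NT}
    {r : ContextFreeRule T g.NT} (hn : {r ∈ g.rules | r.input = n} = {r}) {w : List T} :
    g.Derives [nonterminal n] (w.map terminal) ↔ g.Derives r.output (w.map terminal) := by
  rw [derives_nonterminal_iff]
  constructor
  · rintro ⟨r', hr', hin, h⟩
    have hr'n : r' ∈ ({r} : Finset _) := hn ▸ Finset.mem_filter.mpr ⟨hr', hin⟩
    rwa [Finset.mem_singleton.mp hr'n] at h
  · intro h
    obtain ⟨hr, hin⟩ := Finset.mem_filter.mp (hn ▸ Finset.mem_singleton_self r)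
    exact ⟨r, hr, hin, h⟩

end ContextFreeGrammar

section LinearRules

variable {T : Type}

def linearLanguage (A : Finset T) (f : T → List T) : Language T :=
  {w | ∃ u ≠ [], (∀ a ∈ u, a ∈ A) ∧ w = u ++ u.reverse.flatMap f}

theorem mem_linearLanguage {A : Finset T} {f : T → List T} {w : List T} :
    w ∈ linearLanguage A f ↔ ∃ u ≠ [], (∀ a ∈ u, a ∈ A) ∧ w = u ++ u.reverse.flatMap f :=
  Iff.rfl

theorem mem_linearLanguage_const_nil {A : Finset T} {w : List T} :
    w ∈ linearLanguage A (fun _ => []) ↔ w ≠ [] ∧ ∀ a ∈ w, a ∈ A := by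
  have hnil (u : List T) : u.flatMap (fun _ => ([] : List T)) = [] :=
    List.flatMap_eq_nil_iff.mpr fun _ _ => rfl
  simp [mem_linearLanguage, hnil]

variable [DecidableEq T] {N : Type} [DecidableEq N]

def linearRules (A : Finset T) (f : T → List T) (M : N) : Finset (ContextFreeRule T N) :=
  A.image (fun a => ⟨M, terminal a :: nonterminal M :: (f a).map terminal⟩) ∪
    A.image (fun a => ⟨M, terminal a :: (f a).map terminal⟩)

theorem mem_linearRules {A : Finset T} {f : T → List T} {M : N} {r : ContextFreeRule T N} :
    r ∈ linearRules A f M ↔ ∃ a ∈ A,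
      r = ⟨M, terminal a :: nonterminal M :: (f a).map terminal⟩ ∨
        r = ⟨M, terminal a :: (f a).map terminal⟩ := by
  simp only [linearRules, Finset.mem_union, Finset.mem_image, eq_comm (b := r), ← exists_or,
    ← and_or_left]

theorem ContextFreeGrammar.derives_linear_iff {g : ContextFreeGrammar T} [DecidableEq g.NT]
    {A : Finset T} {f : T → List T} {M : g.NT}
    (hM : {r ∈ g.rules | r.input = M} = linearRules A f M) {w : List T} :
    g.Derives [nonterminal M] (w.map terminal) ↔ w ∈ linearLanguage A f := by
  have hrule {r} (hr : r ∈ linearRules A f M) : r ∈ g.rules :=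
    (Finset.mem_filter.mp (hM ▸ hr)).1
  constructor
  · induction hn : w.length using Nat.strong_induction_on generalizing w with
    | _ n ih =>
    intro hw
    obtain ⟨r, hr, hrM, h⟩ := derives_nonterminal_iff.mp hw
    obtain ⟨a, ha, rfl | rfl⟩ := mem_linearRules.mp (hM ▸ Finset.mem_filter.mpr ⟨hr, hrM⟩)
    · obtain ⟨w', rfl, hw'⟩ := derives_map_terminal_append_iff (s := [a]).mp h
      obtain ⟨v, rfl, hv⟩ := derives_append_map_terminal_iff (u := [nonterminal M]).mp hw'
      obtain ⟨u, -, hu, rfl⟩ := ih v.length (by simp [← hn]) rfl hv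
      exact ⟨a :: u, by simp, List.forall_mem_cons.mpr ⟨ha, hu⟩, by simp⟩
    · obtain ⟨w', rfl, hw'⟩ := derives_map_terminal_append_iff (s := [a]).mp h
      rw [derives_map_terminal_iff.mp hw']
      exact ⟨[a], by simp, by simp [ha], by simp⟩
  · rintro ⟨u, hu, hA, rfl⟩
    induction u with
    | nil => contradiction
    | cons a u ih =>
      have ha : a ∈ A := hA a (by simp)
      by_cases hu : u = []
      · subst hu
        have hr := hrule (mem_linearRules.mpr ⟨a, ha, .inr rfl⟩)
        simpa using (Produces.single ⟨_, hr, .input_output⟩ : g.Derives _ _)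
      · have hr := hrule (mem_linearRules.mpr ⟨a, ha, .inl rfl⟩)
        have h := ((ih hu fun b hb => hA b (by simp [hb])).append_left
          [terminal a]).append_right ((f a).map terminal)
        simpa using Produces.trans_derives ⟨_, hr, .input_output⟩ h

end LinearRules

theorem mem_linearLanguage_mul {A : Finset ℕ} {c : ℕ} {w : List ℕ} :
    w ∈ linearLanguage A (fun a => [c * a]) ↔
      ∃ u ≠ [], (∀ a ∈ u, a ∈ A) ∧ w = u ++ mulStr c u.reverse := by
  simp [mem_linearLanguage, mulStr, List.map_eq_flatMap]

abbrev grammarL22 : ContextFreeGrammar ℕ where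
  NT := Unit
  initial := ()
  rules := linearRules {1, 2, 3, 6} (fun a => [5 * a]) ()

abbrev grammarL21 : ContextFreeGrammar ℕ where
  NT := Fin 3
  initial := 0
  rules := insert ⟨0, [nonterminal 1, nonterminal 2]⟩
    (linearRules {1, 2} (fun a => [3 * a]) 1 ∪ linearRules {5, 10, 15, 30} (fun _ => []) 2)

open ContextFreeGrammar in
theorem grammarL22_language : grammarL22.language = L22 := by
  have hM : {r ∈ grammarL22.rules | r.input = ()} =
      linearRules {1, 2, 3, 6} (fun a => [5 * a]) () := by
    decide
  ext w
  rw [mem_language_iff, derives_linear_iff hM, mem_linearLanguage_mul]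
  simp only [Finset.mem_insert, Finset.mem_singleton]
  rfl

open ContextFreeGrammar in
theorem grammarL21_language : grammarL21.language = L21 := by
  have hS : {r ∈ grammarL21.rules | r.input = 0} = {⟨0, [nonterminal 1, nonterminal 2]⟩} := by
    decide
  have hM : {r ∈ grammarL21.rules | r.input = 1} = linearRules {1, 2} (fun a => [3 * a]) 1 := by
    decide
  have hX : {r ∈ grammarL21.rules | r.input = 2} =
      linearRules {5, 10, 15, 30} (fun _ => []) 2 := by
    decide
  ext w
  rw [mem_language_iff, derives_nonterminal_iff_of_filter_eq_singleton hS,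
    ← List.singleton_append, derives_append_iff]
  simp only [derives_linear_iff hM, derives_linear_iff hX,
    mem_linearLanguage_mul, mem_linearLanguage_const_nil, Finset.mem_insert, Finset.mem_singleton]
  constructor
  · rintro ⟨_, x, rfl, ⟨u, hu, hu12, rfl⟩, hx, hx5⟩
    exact ⟨u, x, hu, hu12, hx, hx5, rfl⟩
  · rintro ⟨u, x, hu, hu12, hx, hx5, rfl⟩
    exact ⟨_, x, rfl, ⟨u, hu, hu12, rfl⟩, hx, hx5⟩

theorem nest_eq (w : List ℕ) :
    nest w = (w ++ mulStr 3 w.reverse) ++ mulStr 5 (w ++ mulStr 3 w.reverse).reverse := by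
  simp [nest, mulStr]

theorem L2_eq_L21_inf_L22 : L2 = L21 ⊓ L22 := by
  ext s
  constructor
  · rintro ⟨w, hw, hw12, rfl⟩
    refine ⟨⟨w, mulStr 15 w ++ mulStr 5 w.reverse, hw, hw12, by simp [mulStr, hw], ?_, ?_⟩,
      ⟨w ++ mulStr 3 w.reverse, by simp [hw], ?_, nest_eq w⟩⟩
    · simp only [mulStr, List.mem_append, List.mem_map, List.mem_reverse]
      rintro _ (⟨a, ha, rfl⟩ | ⟨a, ha, rfl⟩) <;> rcases hw12 a ha with rfl | rfl <;> simp
    · simp [nest]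
    · simp only [mulStr, List.mem_append, List.mem_map, List.mem_reverse]
      rintro _ (ha | ⟨a, ha, rfl⟩) <;> rcases hw12 _ ha with rfl | rfl <;> simp
  · rintro ⟨⟨w, x, hw, hw12, -, hx, hs⟩, ⟨y, -, hy, rfl⟩⟩
    have hprefix : w ++ mulStr 3 w.reverse = y := by
      refine List.eq_of_append_eq_append_of_forall (p := fun a => ¬ 5 ∣ a) ?_ ?_ ?_ ?_ hs.symm
      · simp only [mulStr, List.mem_append, List.mem_map, List.mem_reverse]
        rintro _ (ha | ⟨a, ha, rfl⟩) <;> rcases hw12 _ ha with rfl | rfl <;> decide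
      · intro a ha; rcases hy a ha with rfl | rfl | rfl | rfl <;> decide
      · intro a ha; rcases hx a ha with rfl | rfl | rfl | rfl <;> decide
      · simp [mulStr]
    exact ⟨w, hw, hw12, by rw [nest_eq, hprefix]⟩

/-- L₂ is the intersection of the context-free languages L₂,₁ and L₂,₂;
in particular L₂ belongs to CFL(2). -/
theorem L2_eq_inter_and_in_CFL2 :
    L21.IsContextFree ∧ L22.IsContextFree ∧ L2 = L21 ⊓ L22 ∧
      (∃ La Lb : Language ℕ, La.IsContextFree ∧ Lb.IsContextFree ∧ L2 = La ⊓ Lb) := by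
  have h21 : L21.IsContextFree := ⟨grammarL21, grammarL21_language⟩
  have h22 : L22.IsContextFree := ⟨grammarL22, grammarL22_language⟩
  exact ⟨h21, h22, L2_eq_L21_inf_L22, L21, L22, h21, h22, L2_eq_L21_inf_L22⟩
end

section
/- (REG/n)_serial is contained in REG/n: for every alphabet Σ and every language L over Σ, if L belongs to (REG/n)_serial then L belongs to REG/n. -/
/-!
Run a DFA `M` for `L''` on the serial advice `g n` alone; the state `q n` it reaches depends only on
`n`, and `x ∈ L` iff `M` accepts `x` when started in `q n`. So the parallel advice can be the
constant word `q n, …, q n`: a DFA reading `x` in parallel with it takes its start state from the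
advice component of the first letter and then simulates `M` on the `σ`-components. Only the empty
word gets no advice letter, and its membership is hard-wired into the acceptance condition.
-/

namespace DFA

variable {α σ : Type*} (M : DFA α σ) (acceptsNil : Prop)

def startFromHead : DFA (α × σ) (Option σ) where
  step s p := some (M.step (s.getD p.2) p.1)
  start := none
  accept s := s.elim acceptsNil (· ∈ M.accept)

theorem evalFrom_some_startFromHead (c : σ) (w : List (α × σ)) :
    (M.startFromHead acceptsNil).evalFrom (some c) w = some (M.evalFrom c (w.map Prod.fst)) := by
  induction w generalizing c with
  | nil => rfl
  | cons p w ih => exact ih _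

theorem eval_cons_startFromHead (a : α) (c : σ) (w : List (α × σ)) :
    (M.startFromHead acceptsNil).eval ((a, c) :: w) =
      some (M.evalFrom c (a :: w.map Prod.fst)) :=
  M.evalFrom_some_startFromHead acceptsNil _ w

theorem mem_accepts_startFromHead_zip_replicate {x : List α} {c : σ}
    (hnil : x = [] → (acceptsNil ↔ c ∈ M.accept)) :
    x.zip (List.replicate x.length c) ∈ (M.startFromHead acceptsNil).accepts ↔
      M.evalFrom c x ∈ M.accept := by
  cases x with
  | nil => exact hnil rfl
  | cons a x =>
    rw [mem_accepts, List.length_cons, List.replicate_succ, List.zip_cons_cons,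
      eval_cons_startFromHead, List.map_fst_zip (List.length_replicate ..).ge]
    rfl

end DFA

theorem REG_serial_advice_subset_REG_parallel_advice_general
    (σ : Type) (L : Language σ)
    (hserial : ∃ (Γ₀ : Type) (_ : Fintype Γ₀) (g : ℕ → List Γ₀)
        (L'' : Language (Γ₀ ⊕ σ)),
      (∀ n, (g n).length = n) ∧ L''.IsRegular ∧
        ∀ x : List σ, x ∈ L ↔ (g x.length).map Sum.inl ++ x.map Sum.inr ∈ L'') :
    ∃ (Γ : Type) (_ : Fintype Γ) (h : ℕ → List Γ) (L' : Language (σ × Γ)),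
      (∀ n, (h n).length = n) ∧ L'.IsRegular ∧
        ∀ x : List σ, x ∈ L ↔ x.zip (h x.length) ∈ L' := by
  obtain ⟨Γ₀, _, g, L'', -, ⟨Q, _, M, rfl⟩, hmem⟩ := hserial
  let q (n : ℕ) : Q := M.evalFrom M.start ((g n).map Sum.inl)
  let N := (M.comap Sum.inr).startFromHead (q 0 ∈ M.accept)
  refine ⟨Q, inferInstance, fun n => List.replicate n (q n), N.accepts,
    fun n => List.length_replicate, ⟨_, inferInstance, N, rfl⟩, fun x => ?_⟩
  rw [hmem, DFA.mem_accepts, DFA.eval, DFA.evalFrom_of_append,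
    DFA.mem_accepts_startFromHead_zip_replicate, DFA.evalFrom_comap]
  · rfl
  · rintro rfl
    rfl

/-- (REG/n)_serial ⊆ REG/n : for every alphabet Σ and every language L over Σ,
if L has a regular recognizer with length-respecting serial advice, then L has a
regular recognizer with length-respecting parallel advice. -/
theorem REG_serial_advice_subset_REG_parallel_advice
    (σ : Type) [Fintype σ] (L : Language σ)
    (hserial : ∃ (Γ₀ : Type) (_ : Fintype Γ₀) (g : ℕ → List Γ₀)
        (L'' : Language (Γ₀ ⊕ σ)),
      (∀ n, (g n).length = n) ∧ L''.IsRegular ∧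
        ∀ x : List σ, x ∈ L ↔ (g x.length).map Sum.inl ++ x.map Sum.inr ∈ L'') :
    ∃ (Γ : Type) (_ : Fintype Γ) (h : ℕ → List Γ) (L' : Language (σ × Γ)),
      (∀ n, (h n).length = n) ∧ L'.IsRegular ∧
        ∀ x : List σ, x ∈ L ↔ x.zip (h x.length) ∈ L' :=
  REG_serial_advice_subset_REG_parallel_advice_general σ L hserial
end

section
/- Let n be a positive multiple of 4 and let j₀ be a natural number with 2 ≤ j₀ ≤ n/4. Fix a position i with i + j₀ ≤ n and a string u of length j₀ over {1,2,3,6,5,10,15,30}. Then the number of strings w ∈ {1,2}^{n/4} such that the string w · (wᴿ)ₓ₃ · (w)ₓ₁₅ · (wᴿ)ₓ₅ has u as its substring occupying positions i+1 through i+j₀ is at most 2^{n/4 − ⌈j₀/2⌉}. -/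
lemma mulStr_length (c : ℕ) (u : List ℕ) : (mulStr c u).length = u.length :=
  List.length_map ..

lemma nest_get?_0 (w : List ℕ) {p : ℕ} (hp : p < w.length) :
    (nest w)[p]? = Option.map (1 * ·) w[p]? := by
  have h1 : p < ((w ++ mulStr 3 w.reverse) ++ mulStr 15 w).length := by
    simp [mulStr_length]; omega
  have h2 : p < (w ++ mulStr 3 w.reverse).length := by
    simp [mulStr_length]; omega
  unfold nest
  rw [List.getElem?_append, if_pos h1, List.getElem?_append, if_pos h2,
      List.getElem?_append, if_pos hp]
  cases w[p]? <;> simp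

lemma nest_get?_1 (w : List ℕ) {p : ℕ} (h1 : w.length ≤ p) (h2 : p < 2 * w.length) :
    (nest w)[p]? = Option.map (3 * ·) w[2 * w.length - 1 - p]? := by
  have ha : p < ((w ++ mulStr 3 w.reverse) ++ mulStr 15 w).length := by
    simp [mulStr_length]; omega
  have hb : p < (w ++ mulStr 3 w.reverse).length := by
    simp [mulStr_length]; omega
  unfold nest
  rw [List.getElem?_append, if_pos ha, List.getElem?_append, if_pos hb,
      List.getElem?_append_right h1]
  unfold mulStr
  rw [List.getElem?_map, List.getElem?_reverse (by omega)]
  congr 2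
  omega

lemma nest_get?_2 (w : List ℕ) {p : ℕ} (h1 : 2 * w.length ≤ p) (h2 : p < 3 * w.length) :
    (nest w)[p]? = Option.map (15 * ·) w[p - 2 * w.length]? := by
  have ha : p < ((w ++ mulStr 3 w.reverse) ++ mulStr 15 w).length := by
    simp [mulStr_length]; omega
  have hb : (w ++ mulStr 3 w.reverse).length ≤ p := by
    simp [mulStr_length]; omega
  unfold nest
  rw [List.getElem?_append, if_pos ha, List.getElem?_append_right hb]
  unfold mulStr
  rw [List.getElem?_map]
  congr 2
  simp [mulStr_length]
  omega

lemma nest_get?_3 (w : List ℕ) {p : ℕ} (h1 : 3 * w.length ≤ p) (h2 : p < 4 * w.length) :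
    (nest w)[p]? = Option.map (5 * ·) w[4 * w.length - 1 - p]? := by
  have ha : ((w ++ mulStr 3 w.reverse) ++ mulStr 15 w).length ≤ p := by
    simp [mulStr_length]; omega
  unfold nest
  rw [List.getElem?_append_right ha]
  unfold mulStr
  rw [List.getElem?_map, List.getElem?_reverse (by simp [mulStr_length]; omega)]
  congr 2
  simp [mulStr_length]
  omega

lemma middle_eq (k i j₀ a m c : ℕ) (u : List ℕ) (hc : 0 < c) (ham : a + m ≤ k)
    (f : ℕ → ℕ) (hf : ∀ t, t < m → f t < j₀)
    (hidx : ∀ w : List ℕ, w.length = k → ∀ t, t < m →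
      (nest w)[i + f t]? = Option.map (c * ·) w[a + t]?)
    (w w' : List ℕ) (hw : w.length = k) (hw' : w'.length = k)
    (hsub : ((nest w).drop i).take j₀ = u) (hsub' : ((nest w').drop i).take j₀ = u) :
    (w.drop a).take m = (w'.drop a).take m := by
  apply List.ext_getElem?
  intro t
  rw [List.getElem?_take, List.getElem?_take]
  by_cases ht : t < m
  · rw [if_pos ht, if_pos ht, List.getElem?_drop, List.getElem?_drop]
    have h1 := hidx w hw t ht
    have h2 := hidx w' hw' t ht
    have hnu : ∀ v : List ℕ, ((nest v).drop i).take j₀ = u →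
        (nest v)[i + f t]? = u[f t]? := by
      intro v hv
      rw [← hv, List.getElem?_take, if_pos (hf t ht), List.getElem?_drop]
    have hu1 : Option.map (c * ·) w[a + t]? = Option.map (c * ·) w'[a + t]? := by
      rw [← h1, ← h2, hnu w hsub, hnu w' hsub']
    have hlt : a + t < w.length := by omega
    have hlt' : a + t < w'.length := by omega
    rw [List.getElem?_eq_getElem hlt, List.getElem?_eq_getElem hlt'] at hu1 ⊢
    simp only [Option.map_some] at hu1
    have := Option.some.inj hu1
    exact congrArg some (Nat.eq_of_mul_eq_mul_left hc this)
  · rw [if_neg ht, if_neg ht]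

lemma window_select (k i j₀ : ℕ) (hk : 0 < k) (hj : 1 ≤ j₀) (hjk : j₀ ≤ k)
    (hij : i + j₀ ≤ 4 * k) :
    ∃ p₀ m, (j₀ + 1) / 2 ≤ m ∧ 0 < m ∧ i ≤ p₀ ∧ p₀ + m ≤ i + j₀ ∧
      (p₀ + m ≤ k ∨ (k ≤ p₀ ∧ p₀ + m ≤ 2 * k) ∨ (2 * k ≤ p₀ ∧ p₀ + m ≤ 3 * k) ∨
        (3 * k ≤ p₀ ∧ p₀ + m ≤ 4 * k)) := by
  rcases Nat.lt_or_ge i k with h0 | h0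
  · by_cases hs : i + j₀ ≤ k
    · exact ⟨i, j₀, by omega, by omega, le_refl _, by omega, Or.inl (by omega)⟩
    · rcases le_or_gt (i + j₀ - k) (k - i) with hlr | hlr
      · exact ⟨i, k - i, by omega, by omega, le_refl _, by omega, Or.inl (by omega)⟩
      · exact ⟨k, i + j₀ - k, by omega, by omega, by omega, by omega,
          Or.inr (Or.inl (by omega))⟩
  rcases Nat.lt_or_ge i (2 * k) with h1 | h1
  · by_cases hs : i + j₀ ≤ 2 * k
    · exact ⟨i, j₀, by omega, by omega, le_refl _, by omega, Or.inr (Or.inl (by omega))⟩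
    · rcases le_or_gt (i + j₀ - 2 * k) (2 * k - i) with hlr | hlr
      · exact ⟨i, 2 * k - i, by omega, by omega, le_refl _, by omega,
          Or.inr (Or.inl (by omega))⟩
      · exact ⟨2 * k, i + j₀ - 2 * k, by omega, by omega, by omega, by omega,
          Or.inr (Or.inr (Or.inl (by omega)))⟩
  rcases Nat.lt_or_ge i (3 * k) with h2 | h2
  · by_cases hs : i + j₀ ≤ 3 * k
    · exact ⟨i, j₀, by omega, by omega, le_refl _, by omega,
        Or.inr (Or.inr (Or.inl (by omega)))⟩
    · rcases le_or_gt (i + j₀ - 3 * k) (3 * k - i) with hlr | hlr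
      · exact ⟨i, 3 * k - i, by omega, by omega, le_refl _, by omega,
          Or.inr (Or.inr (Or.inl (by omega)))⟩
      · exact ⟨3 * k, i + j₀ - 3 * k, by omega, by omega, by omega, by omega,
          Or.inr (Or.inr (Or.inr (by omega)))⟩
  · exact ⟨i, j₀, by omega, by omega, le_refl _, by omega,
      Or.inr (Or.inr (Or.inr (by omega)))⟩

lemma binary_count (L : ℕ) :
    ({w : List ℕ | w.length = L ∧ ∀ a ∈ w, a = 1 ∨ a = 2}).Finite ∧
    ({w : List ℕ | w.length = L ∧ ∀ a ∈ w, a = 1 ∨ a = 2}).ncard ≤ 2 ^ L := by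
  induction L with
  | zero =>
    have he : {w : List ℕ | w.length = 0 ∧ ∀ a ∈ w, a = 1 ∨ a = 2} = {[]} := by
      ext w
      constructor
      · rintro ⟨h, -⟩
        simpa using List.length_eq_zero_iff.mp h
      · rintro rfl
        exact ⟨rfl, by simp⟩
    rw [he]
    exact ⟨Set.finite_singleton _, by simp⟩
  | succ L ih =>
    set S := {w : List ℕ | w.length = L ∧ ∀ a ∈ w, a = 1 ∨ a = 2} with hS
    have hsub : {w : List ℕ | w.length = L + 1 ∧ ∀ a ∈ w, a = 1 ∨ a = 2} ⊆
        ((1 :: ·) '' S) ∪ ((2 :: ·) '' S) := by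
      rintro w ⟨hl, hP⟩
      cases w with
      | nil => simp at hl
      | cons a t =>
        have htS : t ∈ S := ⟨by simpa using hl, fun b hb => hP b (by simp [hb])⟩
        rcases hP a (by simp) with rfl | rfl
        · exact Or.inl ⟨t, htS, rfl⟩
        · exact Or.inr ⟨t, htS, rfl⟩
    have hfin : (((1 :: ·) '' S) ∪ ((2 :: ·) '' S)).Finite :=
      (ih.1.image _).union (ih.1.image _)
    refine ⟨hfin.subset hsub, ?_⟩
    calc {w : List ℕ | w.length = L + 1 ∧ ∀ a ∈ w, a = 1 ∨ a = 2}.ncard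
        ≤ (((1 :: ·) '' S) ∪ ((2 :: ·) '' S)).ncard := Set.ncard_le_ncard hsub hfin
      _ ≤ ((1 :: ·) '' S).ncard + ((2 :: ·) '' S).ncard := Set.ncard_union_le _ _
      _ ≤ 2 ^ L + 2 ^ L :=
          Nat.add_le_add ((Set.ncard_image_le ih.1).trans ih.2)
            ((Set.ncard_image_le ih.1).trans ih.2)
      _ = 2 ^ (L + 1) := by ring


/-- Counting bound: for a position `i` and a string `u` of length `j₀` (with
`2 ≤ j₀ ≤ n/4`, `i + j₀ ≤ n`, and `n` a positive multiple of 4), the number of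
strings `w ∈ {1,2}^(n/4)` such that `u` occupies positions `i+1,…,i+j₀` of the
string `w (wᴿ)ₓ₃ (w)ₓ₁₅ (wᴿ)ₓ₅` is at most `2 ^ (n/4 - ⌈j₀/2⌉)`. -/
theorem bound_on_bound_strings (n j₀ i : ℕ) (hn : 0 < n) (h4 : 4 ∣ n)
    (hj₀ : 2 ≤ j₀) (hj₀k : j₀ ≤ n / 4) (hij : i + j₀ ≤ n)
    (u : List ℕ) (hu : u.length = j₀) :
    Set.ncard {w : List ℕ | w.length = n / 4 ∧ (∀ a ∈ w, a = 1 ∨ a = 2) ∧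
        ((nest w).drop i).take j₀ = u} ≤ 2 ^ (n / 4 - (j₀ + 1) / 2) := by
  obtain ⟨k, rfl⟩ := h4
  have hk4 : 4 * k / 4 = k := by omega
  rw [hk4] at hj₀k ⊢
  have hk0 : 0 < k := by omega
  obtain ⟨p₀, m, hm2, hm0, hip, hpm, hblocks⟩ :=
    window_select k i j₀ hk0 (by omega) hj₀k hij
  obtain ⟨a, c, f, hc, hamk, hf, hidx⟩ :
      ∃ (a c : ℕ) (f : ℕ → ℕ), 0 < c ∧ a + m ≤ k ∧ (∀ t, t < m → f t < j₀) ∧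
        ∀ w : List ℕ, w.length = k → ∀ t, t < m →
          (nest w)[i + f t]? = Option.map (c * ·) w[a + t]? := by
    rcases hblocks with h | h | h | h
    · refine ⟨p₀, 1, fun t => p₀ + t - i, one_pos, by omega, fun t ht => by simp only []; omega, ?_⟩
      intro w hw t ht
      have e : i + (p₀ + t - i) = p₀ + t := by omega
      rw [e, nest_get?_0 w (by omega)]
    · refine ⟨2 * k - p₀ - m, 3, fun t => p₀ + m - 1 - t - i, by norm_num, by omega,
        fun t ht => by simp only []; omega, ?_⟩
      intro w hw t ht
      have e : i + (p₀ + m - 1 - t - i) = p₀ + m - 1 - t := by omega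
      rw [e, nest_get?_1 w (by omega) (by omega)]
      have e2 : 2 * w.length - 1 - (p₀ + m - 1 - t) = 2 * k - p₀ - m + t := by omega
      rw [e2]
    · refine ⟨p₀ - 2 * k, 15, fun t => p₀ + t - i, by norm_num, by omega,
        fun t ht => by simp only []; omega, ?_⟩
      intro w hw t ht
      have e : i + (p₀ + t - i) = p₀ + t := by omega
      rw [e, nest_get?_2 w (by omega) (by omega)]
      have e2 : p₀ + t - 2 * w.length = p₀ - 2 * k + t := by omega
      rw [e2]
    · refine ⟨4 * k - p₀ - m, 5, fun t => p₀ + m - 1 - t - i, by norm_num, by omega,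
        fun t ht => by simp only []; omega, ?_⟩
      intro w hw t ht
      have e : i + (p₀ + m - 1 - t - i) = p₀ + m - 1 - t := by omega
      rw [e, nest_get?_3 w (by omega) (by omega)]
      have e2 : 4 * w.length - 1 - (p₀ + m - 1 - t) = 4 * k - p₀ - m + t := by omega
      rw [e2]
  have hmap : ∀ w ∈ {w : List ℕ | w.length = k ∧ (∀ a ∈ w, a = 1 ∨ a = 2) ∧
      ((nest w).drop i).take j₀ = u},
      (w.take a ++ w.drop (a + m)) ∈
        {w : List ℕ | w.length = k - m ∧ ∀ a ∈ w, a = 1 ∨ a = 2} := by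
    rintro w ⟨hl, hP, -⟩
    refine ⟨?_, ?_⟩
    · rw [List.length_append, List.length_take, List.length_drop]
      omega
    · intro x hx
      rcases List.mem_append.1 hx with h | h
      · exact hP x (List.mem_of_mem_take h)
      · exact hP x (List.mem_of_mem_drop h)
  have hinj : Set.InjOn (fun w => w.take a ++ w.drop (a + m))
      {w : List ℕ | w.length = k ∧ (∀ a ∈ w, a = 1 ∨ a = 2) ∧
        ((nest w).drop i).take j₀ = u} := by
    rintro w ⟨hl, hP, hsub⟩ w' ⟨hl', hP', hsub'⟩ heq
    simp only at heq
    obtain ⟨h1, h2⟩ := List.append_inj heq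
      (by rw [List.length_take, List.length_take]; omega)
    have hmid := middle_eq k i j₀ a m c u hc hamk f hf hidx w w' hl hl' hsub hsub'
    have hw : w = w.take a ++ ((w.drop a).take m ++ w.drop (a + m)) := by
      rw [← List.drop_drop, List.take_append_drop, List.take_append_drop]
    have hw' : w' = w'.take a ++ ((w'.drop a).take m ++ w'.drop (a + m)) := by
      rw [← List.drop_drop, List.take_append_drop, List.take_append_drop]
    calc w = w.take a ++ ((w.drop a).take m ++ w.drop (a + m)) := hw
      _ = w'.take a ++ ((w'.drop a).take m ++ w'.drop (a + m)) := by
          rw [h1, h2, hmid]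
      _ = w' := hw'.symm
  calc {w : List ℕ | w.length = k ∧ (∀ a ∈ w, a = 1 ∨ a = 2) ∧
        ((nest w).drop i).take j₀ = u}.ncard
      ≤ {w : List ℕ | w.length = k - m ∧ ∀ a ∈ w, a = 1 ∨ a = 2}.ncard :=
        Set.ncard_le_ncard_of_injOn _ hmap hinj (binary_count (k - m)).1
    _ ≤ 2 ^ (k - m) := (binary_count (k - m)).2
    _ ≤ 2 ^ (k - (j₀ + 1) / 2) := Nat.pow_le_pow_right (by norm_num) (by omega)
end

section
/- The map w ↦ w · (wᴿ)ₓ₃ · (w)ₓ₁₅ · (wᴿ)ₓ₅ from nonempty strings over {1,2} to strings over {1,2,3,6,5,10,15,30} is injective; consequently, for every positive multiple n of 4, the number of strings of length n in the language L₂ = { w · (wᴿ)ₓ₃ · (w)ₓ₁₅ · (wᴿ)ₓ₅ : w a nonempty string over {1,2} } is exactly 2^{n/4}, and L₂ contains no strings whose length is not a positive multiple of 4. -/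
lemma nest_length (w : List ℕ) : (nest w).length = 4 * w.length := by
  simp [nest, mulStr]; omega

lemma nest_take (w : List ℕ) : (nest w).take w.length = w := by
  simp [nest, List.append_assoc, List.take_left]

lemma nest_inj : Function.Injective nest := by
  intro w w' h
  have hl : w.length = w'.length := by
    have := congrArg List.length h
    rw [nest_length, nest_length] at this; omega
  calc w = (nest w).take w.length := (nest_take w).symm
    _ = (nest w').take w'.length := by rw [h, hl]
    _ = w' := nest_take w'

def S12 (m : ℕ) : Set (List ℕ) := {w | (∀ a ∈ w, a = 1 ∨ a = 2) ∧ w.length = m}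

lemma S12_succ (m : ℕ) :
    S12 (m + 1) = (List.cons 1 '' S12 m) ∪ (List.cons 2 '' S12 m) := by
  ext w
  constructor
  · rintro ⟨hP, hlen⟩
    cases w with
    | nil => simp at hlen
    | cons a t =>
      have ht : t ∈ S12 m := ⟨fun b hb => hP b (by simp [hb]), by simpa using hlen⟩
      rcases hP a (by simp) with h | h
      · left; exact ⟨t, ht, by rw [h]⟩
      · right; exact ⟨t, ht, by rw [h]⟩
  · rintro (⟨t, ⟨hP, hlen⟩, rfl⟩ | ⟨t, ⟨hP, hlen⟩, rfl⟩)
    · refine ⟨?_, by simp [hlen]⟩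
      intro a ha
      rcases List.mem_cons.mp ha with rfl | ha
      · left; rfl
      · exact hP a ha
    · refine ⟨?_, by simp [hlen]⟩
      intro a ha
      rcases List.mem_cons.mp ha with rfl | ha
      · right; rfl
      · exact hP a ha

lemma S12_card : ∀ m, (S12 m).Finite ∧ (S12 m).ncard = 2 ^ m := by
  intro m
  induction m with
  | zero =>
    have h0 : S12 0 = {([] : List ℕ)} := by
      ext w
      simp only [S12, Set.mem_setOf_eq, List.length_eq_zero_iff, Set.mem_singleton_iff]
      constructor
      · rintro ⟨_, h⟩; exact h
      · rintro rfl; exact ⟨by simp, rfl⟩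
    rw [h0]
    exact ⟨Set.finite_singleton _, Set.ncard_singleton _⟩
  | succ m ih =>
    obtain ⟨hfin, hcard⟩ := ih
    have hinj1 : Function.Injective (List.cons (1 : ℕ)) := fun a b h => by
      injection h
    have hinj2 : Function.Injective (List.cons (2 : ℕ)) := fun a b h => by
      injection h
    have hd : Disjoint (List.cons 1 '' S12 m) (List.cons 2 '' S12 m) := by
      rw [Set.disjoint_left]
      rintro x ⟨t, _, rfl⟩ ⟨t', _, h⟩
      injection h with h1 h2
      omega
    constructor
    · rw [S12_succ]; exact (hfin.image _).union (hfin.image _)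
    · rw [S12_succ, Set.ncard_union_eq hd (hfin.image _) (hfin.image _),
        Set.ncard_image_of_injective _ hinj1, Set.ncard_image_of_injective _ hinj2,
        hcard, pow_succ]
      omega

lemma census_eq (n k : ℕ) (hk : 0 < k) (hn : n = 4 * k) :
    {s : List ℕ | s ∈ L2 ∧ s.length = n} = nest '' S12 k := by
  ext s
  constructor
  · rintro ⟨⟨w, hne, hP, rfl⟩, hlen⟩
    refine ⟨w, ⟨hP, ?_⟩, rfl⟩
    rw [nest_length] at hlen; omega
  · rintro ⟨w, ⟨hP, hlen⟩, rfl⟩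
    refine ⟨⟨w, ?_, hP, rfl⟩, ?_⟩
    · intro h; rw [h] at hlen; simp at hlen; omega
    · rw [nest_length, hlen, hn]

/-- The map `w ↦ w (wᴿ)ₓ₃ (w)ₓ₁₅ (wᴿ)ₓ₅` is injective on nonempty strings over
{1,2}; consequently L₂ has exactly `2 ^ (n/4)` strings of each length `n` that is a
positive multiple of 4, and no strings of any other length. -/
theorem nest_injective_and_census :
    (∀ w w' : List ℕ, w ≠ [] → (∀ a ∈ w, a = 1 ∨ a = 2) →
      w' ≠ [] → (∀ a ∈ w', a = 1 ∨ a = 2) → nest w = nest w' → w = w') ∧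
    (∀ n : ℕ, 0 < n → 4 ∣ n →
      Set.ncard {s : List ℕ | s ∈ L2 ∧ s.length = n} = 2 ^ (n / 4)) ∧
    (∀ s ∈ L2, 0 < s.length ∧ 4 ∣ s.length) := by
  refine ⟨?_, ?_, ?_⟩
  · intro w w' _ _ _ _ h; exact nest_inj h
  · intro n hn hdvd
    obtain ⟨k, rfl⟩ := hdvd
    have hk : 0 < k := by omega
    rw [census_eq (4 * k) k hk rfl, Set.ncard_image_of_injective _ nest_inj,
      (S12_card k).2]
    congr 1
    omega
  · rintro s ⟨w, hne, _, rfl⟩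
    have : 0 < w.length := List.length_pos_iff.mpr hne
    rw [nest_length]
    exact ⟨by omega, ⟨w.length, rfl⟩⟩
end

section
/- REG/n is not contained in (REG/n)_serial: there exists a language, namely L_eq = { 0ⁿ 1ⁿ : n ∈ ℕ } over the alphabet {0,1}, that belongs to REG/n but does not belong to (REG/n)_serial. -/
/-- L_eq = { 0ⁿ 1ⁿ : n ∈ ℕ } over the alphabet {0,1} (as `Fin 2`). -/
def Leq : Language (Fin 2) :=
  {s | ∃ n : ℕ, s = List.replicate n 0 ++ List.replicate n 1}

/-- `L` belongs to REG/n (parallel length-respecting advice). -/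
def InREGAdviceParallel {T : Type} (L : Language T) : Prop :=
  ∃ (Γ : Type) (_ : Fintype Γ) (h : ℕ → List Γ) (L' : Language (T × Γ)),
    (∀ n, (h n).length = n) ∧ L'.IsRegular ∧
      ∀ x : List T, x ∈ L ↔ x.zip (h x.length) ∈ L'

/-- `L` belongs to (REG/n)_serial (serial length-respecting advice). -/
def InREGAdviceSerial {T : Type} (L : Language T) : Prop :=
  ∃ (Γ₀ : Type) (_ : Fintype Γ₀) (g : ℕ → List Γ₀) (L'' : Language (Γ₀ ⊕ T)),
    (∀ n, (g n).length = n) ∧ L''.IsRegular ∧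
      ∀ x : List T, x ∈ L ↔ (g x.length).map Sum.inl ++ x.map Sum.inr ∈ L''

/-!
Parallel advice can spell out the unique word of each length of `Leq`, and checking a word
against it letter by letter is regular. Serial advice is read before the input, so it only
selects the state `q n` in which a fixed automaton with finite state set `σ` starts reading
inputs of length `n`. Choose `a ≥ |σ|` and `d > 0` divisible by `|σ|!` with
`q (2a) = q (2(a + d))`. From step `|σ|` on, the orbit of a state under a fixed letter is
periodic with period dividing `|σ|!`, so `0^a 1^a` and `0^(a + 2d) 1^a` drive `q (2a)` into the
same state, and the latter word, of length `2(a + d)`, would lie in `Leq`.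
-/

open Function Fintype Nat

theorem Function.isPeriodicPt_factorial_card_iterate {α : Type*} [Fintype α] (f : α → α) (x : α)
    {m : ℕ} (hm : card α ≤ m) : IsPeriodicPt f (card α)! (f^[m] x) := by
  obtain ⟨i, j, hij, hfij⟩ : ∃ i j : Fin (card α + 1), i < j ∧ f^[i] x = f^[j] x := by
    by_contra! h
    simpa using Fintype.card_le_of_injective _ (Injective.of_lt_imp_ne h)
  have hper : IsPeriodicPt f (j - i) (f^[i] x) := by
    rw [IsPeriodicPt, IsFixedPt, ← iterate_add_apply, Nat.sub_add_cancel hij.le, hfij]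
  have hi : (i : ℕ) ≤ m := by omega
  have hdvd : (j - i : ℕ) ∣ (card α)! := Nat.dvd_factorial (by omega) (by omega)
  simpa [← iterate_add_apply, Nat.sub_add_cancel hi] using
    (hper.apply_iterate (m - i)).trans_dvd hdvd

namespace DFA

variable {α σ : Type*} (M : DFA α σ)

theorem evalFrom_replicate (s : σ) (a : α) (n : ℕ) :
    M.evalFrom s (List.replicate n a) = (M.step · a)^[n] s := by
  induction n with
  | zero => rfl
  | succ n ih => rw [List.replicate_succ', evalFrom_append_singleton, ih, iterate_succ_apply']

theorem evalFrom_replicate_add_of_factorial_dvd [Fintype σ] (s : σ) (a : α) {m d : ℕ}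
    (hm : card σ ≤ m) (hd : (card σ)! ∣ d) :
    M.evalFrom s (List.replicate (m + d) a) = M.evalFrom s (List.replicate m a) := by
  obtain ⟨k, rfl⟩ := hd
  rw [evalFrom_replicate, evalFrom_replicate, add_comm, iterate_add_apply]
  exact ((isPeriodicPt_factorial_card_iterate _ s hm).mul_const k).eq

end DFA

namespace Language

variable {α : Type*}

theorem isRegular_setOf_forall_mem (P : α → Prop) :
    IsRegular {w : List α | ∀ a ∈ w, P a} := by
  let M : DFA α Prop := ⟨fun s a => s ∧ P a, True, {s | s}⟩
  have hM : ∀ w s, M.evalFrom s w = (s ∧ ∀ a ∈ w, P a) := by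
    intro w
    induction w with
    | nil => simp
    | cons a w ih => simp [M, ih, and_assoc]
  exact ⟨Prop, inferInstance, M, by
    ext w; simp only [DFA.mem_accepts, DFA.eval, hM, true_and, Set.mem_ofPred_eq, M]; rfl⟩

theorem isRegular_setOf_eq_nil_imp (p : Prop) : IsRegular {w : List α | w = [] → p} := by
  let M : DFA α Prop := ⟨fun _ _ => True, p, {s | s}⟩
  have hM : ∀ w s, M.evalFrom s w = (w = [] → s) := by
    intro w
    induction w with
    | nil => simp
    | cons a w ih => simp [M, ih]
  exact ⟨Prop, inferInstance, M, by
    ext w; simp only [DFA.mem_accepts, DFA.eval, hM, Set.mem_ofPred_eq, M]; rfl⟩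

end Language

theorem List.forall_mem_zip_iff_eq_map {α β : Type*} (f : α → β) :
    ∀ {x : List α} {y : List β}, x.length = y.length →
      ((∀ p ∈ x.zip y, p.2 = f p.1) ↔ y = x.map f)
  | [], [], _ => by simp
  | a :: x, b :: y, h => by
    simp only [zip_cons_cons, mem_cons, forall_eq_or_imp, map_cons, cons.injEq]
    exact and_congr Iff.rfl (forall_mem_zip_iff_eq_map f (Nat.succ.inj h))

theorem inREGAdviceParallel_of_injOn_length {T : Type} [Fintype T] {L : Language T}
    (hL : Set.InjOn List.length L) : InREGAdviceParallel L := by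
  classical
  let h : ℕ → List (Option T) := fun n =>
    if hn : ∃ y ∈ L, y.length = n then hn.choose.map some else List.replicate n none
  have h_length : ∀ n, (h n).length = n := by
    intro n
    by_cases hn : ∃ y ∈ L, y.length = n
    · simp [h, hn, hn.choose_spec.2]
    · simp [h, hn]
  -- The advice for length `0` is empty, so `L'` itself has to decide whether `[] ∈ L`.
  refine ⟨Option T, inferInstance, h, {v | v = [] → [] ∈ L} ⊓ {v | ∀ p ∈ v, p.2 = some p.1},
    h_length, (Language.isRegular_setOf_eq_nil_imp _).inf (Language.isRegular_setOf_forall_mem _),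
    fun x => ?_⟩
  have hnil : x.zip (h x.length) = [] ↔ x = [] := by
    rw [← List.length_eq_zero_iff, List.length_zip, h_length, min_self, List.length_eq_zero_iff]
  suffices x ∈ L ↔ (x = [] → [] ∈ L) ∧ h x.length = x.map some by
    rwa [← List.forall_mem_zip_iff_eq_map some (h_length _).symm, ← hnil] at this
  by_cases hx : ∃ y ∈ L, y.length = x.length
  · have hy := hx.choose_spec
    simp only [h, dif_pos hx, List.map_inj_right (fun _ _ => Option.some_inj.mp)]
    exact ⟨fun hxL => ⟨fun hx0 => hx0 ▸ hxL, hL hy.1 hxL hy.2⟩, fun ⟨_, hxy⟩ => hxy ▸ hy.1⟩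
  · have hxL : x ∉ L := fun hxL => hx ⟨x, hxL, rfl⟩
    simp only [h, dif_neg hx]
    refine iff_of_false hxL fun ⟨hx0, hmap⟩ => ?_
    cases x with
    | nil => exact hxL (hx0 rfl)
    | cons a x => simp [List.replicate_succ] at hmap

theorem InREGAdviceSerial.exists_dfa {T : Type} {L : Language T} (h : InREGAdviceSerial L) :
    ∃ (σ : Type) (_ : Fintype σ) (M : DFA T σ) (q : ℕ → σ),
      ∀ x : List T, x ∈ L ↔ x ∈ M.acceptsFrom (q x.length) := by
  obtain ⟨Γ₀, _, g, L'', -, ⟨σ, _, N, rfl⟩, hL⟩ := h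
  refine ⟨σ, inferInstance, N.comap Sum.inr, fun n => N.eval ((g n).map Sum.inl), fun x => ?_⟩
  rw [hL, DFA.mem_accepts, DFA.mem_acceptsFrom, DFA.evalFrom_comap, DFA.eval,
    DFA.evalFrom_of_append]
  rfl

theorem injOn_length_Leq : Set.InjOn List.length Leq := by
  rintro _ ⟨a, rfl⟩ _ ⟨b, rfl⟩ hab
  obtain rfl : a = b := by simp only [List.length_append, List.length_replicate] at hab; omega
  rfl

theorem replicate_append_replicate_mem_Leq_iff {a b : ℕ} :
    List.replicate a 0 ++ List.replicate b 1 ∈ Leq ↔ a = b := by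
  refine ⟨fun ⟨n, h⟩ => ?_, fun h => ⟨a, h ▸ rfl⟩⟩
  have h0 := congrArg (List.count 0) h
  have h1 := congrArg (List.count 1) h
  simp only [List.count_append, List.count_replicate_self, List.count_replicate, Fin.reduceBEq,
    Bool.false_eq_true, ↓reduceIte, add_zero, zero_add] at h0 h1
  omega

theorem not_inREGAdviceSerial_Leq : ¬ InREGAdviceSerial Leq := by
  intro h
  obtain ⟨σ, _, M, q, hM⟩ := h.exists_dfa
  obtain ⟨a, d, ha, hd, hd0, hq⟩ : ∃ a d, card σ ≤ a ∧ (card σ)! ∣ d ∧ 0 < d ∧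
      q (2 * a) = q (2 * (a + d)) := by
    obtain ⟨i, j, hij, hq⟩ := Set.finite_univ.exists_lt_map_eq_of_forall_mem
      (f := fun i => q (2 * (card σ + i * (card σ)!))) fun _ => Set.mem_univ _
    refine ⟨card σ + i * (card σ)!, (j - i) * (card σ)!, Nat.le_add_right _ _, dvd_mul_left _ _,
      Nat.mul_pos (by omega) (factorial_pos _), ?_⟩
    rwa [add_assoc, ← add_mul, Nat.add_sub_cancel' hij.le]
  have hpump : M.evalFrom (q (2 * a)) (List.replicate (a + 2 * d) 0 ++ List.replicate a 1) =
      M.evalFrom (q (2 * a)) (List.replicate a 0 ++ List.replicate a 1) := by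
    rw [DFA.evalFrom_of_append, DFA.evalFrom_of_append,
      M.evalFrom_replicate_add_of_factorial_dvd _ _ ha (hd.mul_left 2)]
  have hmem : List.replicate (a + 2 * d) 0 ++ List.replicate a 1 ∈ Leq := by
    have hlen : (List.replicate (a + 2 * d) (0 : Fin 2) ++ List.replicate a 1).length =
        2 * (a + d) := by simp only [List.length_append, List.length_replicate]; ring
    rw [hM, DFA.mem_acceptsFrom, hlen, ← hq, hpump]
    simpa [two_mul, DFA.mem_acceptsFrom] using (hM _).1 ⟨a, rfl⟩
  rw [replicate_append_replicate_mem_Leq_iff] at hmem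
  omega

/-- REG/n is not contained in (REG/n)_serial: L_eq witnesses the separation. -/
theorem REG_advice_not_subset_serial :
    InREGAdviceParallel Leq ∧ ¬ InREGAdviceSerial Leq :=
  ⟨inREGAdviceParallel_of_injOn_length injOn_length_Leq, not_inREGAdviceSerial_Leq⟩
end
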